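/- Let β = (b^h), μ ⊂ λ ⊆ β, let (i,j) be a box of λ not in μ such that μ together with (i,j) is again a partition μ₊ (i.e. μ_{i−1} ≥ μ_i + 1 = j). Then c_{μ₊,λ}(α)/c_{μ,λ}(α) = [c_{λ̂,μ̂₊}(α)·c_{μ₊,β}(α)] / [c_{λ̂,μ̂}(α)·c_{μ,β}(α)], where hats denote rotated complements in β and c_{μ,λ}(α) = ∏_{s∈μ}(a_{μ,s}α + ℓ_{λ,s} + 1). -/

import Mathlib

open scoped Classical
open Finset

noncomputable section

/-- A partition: an antitone, eventually-zero sequence of naturals.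
`part i` is the `(i+1)`-st part (0-indexed). -/
structure JPartition where
  part : ℕ → ℕ
  antitone' : Antitone part
  finite' : ∃ N, ∀ n, N ≤ n → part n = 0

namespace JPartition

/-- The size `|λ|` of a partition. -/
def size (l : JPartition) : ℕ := ∑ᶠ i, l.part i

/-- The length (number of nonzero parts). -/
def length (l : JPartition) : ℕ := Nat.card {i | 0 < l.part i}

/-- The multiplicity of `k` as a part. -/
def mult (l : JPartition) (k : ℕ) : ℕ := Nat.card {i | l.part i = k}

/-- The parts of the conjugate (transposed) partition. -/
def conjPart (l : JPartition) (j : ℕ) : ℕ := Nat.card {i | j < l.part i}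

lemma finite_set (l : JPartition) (j : ℕ) : {i | j < l.part i}.Finite := by
  obtain ⟨N, hN⟩ := l.finite'
  refine Set.Finite.subset (Set.finite_Iio N) ?_
  intro i hi
  simp only [Set.mem_setOf_eq] at hi
  by_contra hc
  simp only [Set.mem_Iio, not_lt] at hc
  have := hN i hc
  omega

/-- The conjugate (transposed) partition. -/
def conj (l : JPartition) : JPartition where
  part := l.conjPart
  antitone' := by
    intro a b hab
    exact Nat.card_mono (l.finite_set a) (fun i hi => lt_of_le_of_lt hab hi)
  finite' := by
    refine ⟨l.part 0 + 1, fun n hn => ?_⟩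
    have he : {i | n < l.part i} = (∅ : Set ℕ) := by
      ext i
      simp only [Set.mem_setOf_eq, Set.mem_empty_iff_false, iff_false, not_lt]
      calc l.part i ≤ l.part 0 := l.antitone' (Nat.zero_le i)
        _ ≤ n := by omega
    unfold conjPart
    rw [he]
    simp

/-- The arm of the (0-indexed) box `s = (i,j)` of `λ`. -/
def arm (l : JPartition) (s : ℕ × ℕ) : ℤ := (l.part s.1 : ℤ) - s.2 - 1

/-- The leg of the (0-indexed) box `s = (i,j)` of `λ`. -/
def leg (l : JPartition) (s : ℕ × ℕ) : ℤ := (l.conjPart s.2 : ℤ) - s.1 - 1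

/-- Containment of partitions: `m ⊆ l`. -/
def sub (m l : JPartition) : Prop := ∀ i, m.part i ≤ l.part i

/-- Dominance order on partitions (of the same size). -/
def domLE (m l : JPartition) : Prop :=
  m.size = l.size ∧ ∀ k, ∑ i ∈ Finset.range k, m.part i ≤ ∑ i ∈ Finset.range k, l.part i

end JPartition

/-- The rectangular partition `(b^h)`. -/
def rect (b h : ℕ) : JPartition where
  part := fun i => if i < h then b else 0
  antitone' := by
    intro x y hxy
    by_cases hy : y < h
    · have hx : x < h := lt_of_le_of_lt hxy hy
      simp [hx, hy]
    · simp [hy]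
  finite' := ⟨h, fun n hn => if_neg (by omega)⟩

/-- The rotated complement of `λ` inside the rectangle `(b^h)`. -/
def rotC (b h : ℕ) (l : JPartition) : JPartition where
  part := fun i => if i < h then b - l.part (h - 1 - i) else 0
  antitone' := by
    intro x y hxy
    by_cases hy : y < h
    · have hx : x < h := lt_of_le_of_lt hxy hy
      simp only [if_pos hx, if_pos hy]
      exact Nat.sub_le_sub_left (l.antitone' (show h - 1 - y ≤ h - 1 - x by omega)) b
    · simp [hy]
  finite' := ⟨h, fun n hn => if_neg (by omega)⟩

/-- The empty partition. -/
def emptyP : JPartition := ⟨fun _ => 0, fun _ _ _ => le_rfl, ⟨0, fun _ _ => rfl⟩⟩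

/-- The field `ℚ(α)` of rational functions in the Jack parameter. -/
abbrev K : Type := RatFunc ℚ

/-- The Jack parameter `α`, an indeterminate. -/
def alpha : K := RatFunc.X

/-- Product of `f` over all boxes of the partition `l`. -/
def boxProdM {M : Type*} [CommMonoid M] (l : JPartition) (f : ℕ × ℕ → M) : M :=
  ∏ᶠ i, ∏ j ∈ Finset.range (l.part i), f (i, j)

/-- Number of boxes of `l` satisfying `f`. -/
def boxCount (l : JPartition) (f : ℕ × ℕ → Prop) : ℕ :=
  ∑ᶠ i, ∑ j ∈ Finset.range (l.part i), if f (i, j) then 1 else 0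

/-- `c_{λ,s}(α) = a_{λ,s} α + ℓ_{λ,s} + 1`. -/
def cBox (l : JPartition) (s : ℕ × ℕ) : K := (l.arm s : K) * alpha + (l.leg s : K) + 1

/-- `c'_{λ,s}(α) = (a_{λ,s}+1) α + ℓ_{λ,s}`. -/
def cBox' (l : JPartition) (s : ℕ × ℕ) : K := ((l.arm s : K) + 1) * alpha + (l.leg s : K)

/-- `c_λ(α)`. -/
def cFun (l : JPartition) : K := boxProdM l (cBox l)

/-- `c'_λ(α)`. -/
def cFun' (l : JPartition) : K := boxProdM l (cBox' l)

/-- `c_λ(t)` evaluated at an arbitrary `t`. -/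
def cFunAt (l : JPartition) (t : K) : K :=
  boxProdM l (fun s => (l.arm s : K) * t + (l.leg s : K) + 1)

/-- `c_{μ,λ}(α) = ∏_{s∈μ} (a_{μ,s} α + ℓ_{λ,s} + 1)`. -/
def cMix (m l : JPartition) : K :=
  boxProdM m (fun s => (m.arm s : K) * alpha + (l.leg s : K) + 1)

/-- `c_{μ,λ}(t)` at an arbitrary `t`. -/
def cMixAt (m l : JPartition) (t : K) : K :=
  boxProdM m (fun s => (m.arm s : K) * t + (l.leg s : K) + 1)

/-- `c'_{λ,μ}(α) = ∏_{s∈μ} ((a_{λ,s}+1) α + ℓ_{μ,s})`. -/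
def cMix' (l m : JPartition) : K :=
  boxProdM m (fun s => ((l.arm s : K) + 1) * alpha + (m.leg s : K))

/-- The ring in which symmetric functions live: formal power series in
countably many variables over `ℚ(α)`. -/
abbrev SymF : Type := MvPowerSeries ℕ K

/-- The monomial symmetric function `m_λ`. -/
def msf (l : JPartition) : SymF :=
  fun e => if ∀ k, 0 < k → Nat.card {i | e i = k} = l.mult k then 1 else 0

/-- The power sum symmetric function `p_r`. -/
def psf (r : ℕ) : SymF :=
  fun e => if ∃ i, e = Finsupp.single i r then 1 else 0

/-- The power sum symmetric function `p_λ = ∏ p_{λ_i}`. -/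
def pProd (l : JPartition) : SymF :=
  ∏ᶠ i, if l.part i = 0 then 1 else psf (l.part i)

/-- `z_λ = ∏_k k^{m_k} m_k!`. -/
def zNum (l : JPartition) : ℕ :=
  ∏ᶠ k, if 0 < k then k ^ l.mult k * (l.mult k).factorial else 1

/-- `u_λ = ∏_k m_k!`. -/
def uNum (l : JPartition) : ℕ :=
  ∏ᶠ k, if 0 < k then (l.mult k).factorial else 1

/-- `x ∈ ℚ(α)` is a polynomial in `α` with nonnegative integer coefficients. -/
def IsNonnegPoly (x : K) : Prop :=
  ∃ P : Polynomial ℕ, x = algebraMap (Polynomial ℚ) K (P.map (Nat.castRingHom ℚ))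

/-- The data of the Jack symmetric functions at parameter `t`: a symmetric
bilinear form with `⟨p_λ,p_μ⟩ = δ_{λμ} z_λ t^{ℓ(λ)}`, and the family `J_λ`,
pairwise orthogonal, triangular with respect to the monomial symmetric
functions in dominance order, normalized by `v_{λ,(1^n)} = n!`. -/
structure JackFamily (t : K) where
  inner : SymF →ₗ[K] SymF →ₗ[K] K
  inner_symm : ∀ f g, inner f g = inner g f
  inner_p : ∀ l m : JPartition,
    inner (pProd l) (pProd m) = if l = m then (zNum l : K) * t ^ l.length else 0
  J : JPartition → SymF
  v : JPartition → JPartition → K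
  J_eq : ∀ l, J l = ∑ᶠ m : JPartition, v l m • msf m
  v_tri : ∀ l m, v l m ≠ 0 → JPartition.domLE m l
  v_norm : ∀ l : JPartition, v l (rect 1 l.size) = (Nat.factorial l.size : K)
  orth : ∀ l m, l ≠ m → inner (J l) (J m) = 0

/-- The Jack family together with the skew Jack symmetric functions
`J_{λ/μ}`, characterized by `⟨J_{λ/μ}, J_ν⟩ = ⟨J_λ, J_μ J_ν⟩`, lying in the
span of the `J_ν`, with monomial expansion coefficients `vskew`. -/
structure JackSystem (t : K) extends JackFamily t where
  skewJ : JPartition → JPartition → SymF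
  vskew : JPartition → JPartition → JPartition → K
  skew_eq : ∀ l m, skewJ l m = ∑ᶠ n : JPartition, vskew l m n • msf n
  skew_def : ∀ l m n, inner (skewJ l m) (J n) = inner (J l) (J m * J n)
  skew_mem : ∀ l m, skewJ l m ∈ Submodule.span K (Set.range J)

/-- Stanley's polynomial `g^λ_{μν} = ⟨J_λ, J_μ J_ν⟩`. -/
def gpoly {t : K} (D : JackFamily t) (l m n : JPartition) : K :=
  D.inner (D.J l) (D.J m * D.J n)

/-- The set of boxes of the skew diagram `λ/μ` in the plane `ℤ × ℤ`. -/
def skewSet (l m : JPartition) : Set (ℤ × ℤ) :=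
  {s | 0 ≤ s.1 ∧ 0 ≤ s.2 ∧ m.part s.1.toNat ≤ s.2.toNat ∧ s.2.toNat < l.part s.1.toNat}

/-- The diagrams of `λ/μ` and `λ̃/μ̃` coincide up to translation. -/
def SameUpToTranslation (l m tl tm : JPartition) : Prop :=
  ∃ d : ℤ × ℤ, skewSet tl tm = (fun s => s + d) '' skewSet l m

/-!
Only row `i` of `μ` changes, so `c_{μ₊,λ}/c_{μ,λ}` is the ratio of the factors of that row, whose
legs are read off the columns `λ'_c`; likewise `c_{μ₊,β}/c_{μ,β} = jα + h - i` with `j = μ_i`.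
Rotated, `μ̂` is `μ̂₊` plus one box in column `b - 1 - j`, so `c_{λ̂,μ̂₊}/c_{λ̂,μ̂}` only involves
the boxes of `λ̂` in that column, i.e. the rows `r` of `λ` with `λ_r ≤ j`. What remains is a
telescoping product: the rows with `λ_r = j - a` form the interval `[λ'_{j-a}, λ'_{j-a-1})`, along
which the factors `aα + r - i` shift by one.
-/

namespace JPartition

theorem lt_conjPart_iff (X : JPartition) {r c : ℕ} : r < X.conjPart c ↔ c < X.part r := by
  have ncard_Iio (n : ℕ) : (Set.Iio n).ncard = n := by
    rw [← coe_range, Set.ncard_coe_finset, card_range]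
  rw [conjPart, Nat.card_coe_set_eq]
  constructor
  · intro hr
    by_contra hc
    have hsub : {i | c < X.part i} ⊆ Set.Iio r := fun i hi => by
      by_contra hir
      exact hc (lt_of_lt_of_le hi (X.antitone' (not_lt.mp hir)))
    have := Set.ncard_le_ncard hsub (Set.finite_Iio r)
    rw [ncard_Iio] at this
    omega
  · intro hc
    have hsub : Set.Iio (r + 1) ⊆ {i | c < X.part i} := fun i hi =>
      lt_of_lt_of_le hc (X.antitone' (Nat.lt_succ_iff.mp hi))
    have := Set.ncard_le_ncard hsub (X.finite_set c)
    rw [ncard_Iio] at this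
    omega

theorem conjPart_eq_iff {X : JPartition} {c n : ℕ} :
    X.conjPart c = n ↔ ∀ r, r < n ↔ c < X.part r := by
  refine ⟨fun h r => h ▸ X.lt_conjPart_iff, fun h => eq_of_forall_lt_iff fun r => ?_⟩
  rw [lt_conjPart_iff, h]

theorem conjPart_le {X : JPartition} {h : ℕ} (hX : ∀ r, h ≤ r → X.part r = 0) (c : ℕ) :
    X.conjPart c ≤ h := by
  by_contra H
  have := X.lt_conjPart_iff.mp (not_le.mp H)
  rw [hX h le_rfl] at this
  omega

section AddBox

variable {m mplus : JPartition} {i : ℕ}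

theorem part_addBox_self (hplus : mplus.part = Function.update m.part i (m.part i + 1)) :
    mplus.part i = m.part i + 1 := by
  simp [hplus]

theorem part_addBox_of_ne (hplus : mplus.part = Function.update m.part i (m.part i + 1))
    {r : ℕ} (hr : r ≠ i) : mplus.part r = m.part r := by
  simp [hplus, hr]

theorem conjPart_part_of_addBox (hplus : mplus.part = Function.update m.part i (m.part i + 1)) :
    m.conjPart (m.part i) = i := by
  refine conjPart_eq_iff.mpr fun r => ⟨fun hr => ?_, fun hc => ?_⟩
  · have := mplus.antitone' hr.le
    rw [part_addBox_self hplus, part_addBox_of_ne hplus hr.ne] at this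
    omega
  · by_contra hr
    exact absurd (m.antitone' (not_lt.mp hr)) (not_le.mpr hc)

theorem conjPart_addBox_self (hplus : mplus.part = Function.update m.part i (m.part i + 1)) :
    mplus.conjPart (m.part i) = i + 1 := by
  refine conjPart_eq_iff.mpr fun r => ?_
  by_cases hr : r = i
  · subst hr
    simp [part_addBox_self hplus]
  · rw [part_addBox_of_ne hplus hr, ← lt_conjPart_iff, conjPart_part_of_addBox hplus]
    omega

theorem conjPart_addBox_of_ne (hplus : mplus.part = Function.update m.part i (m.part i + 1))
    {c : ℕ} (hc : c ≠ m.part i) : mplus.conjPart c = m.conjPart c := by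
  refine conjPart_eq_iff.mpr fun r => ?_
  rw [lt_conjPart_iff]
  by_cases hr : r = i
  · subst hr
    rw [part_addBox_self hplus]
    omega
  · rw [part_addBox_of_ne hplus hr]

theorem sub_of_addBox (hplus : mplus.part = Function.update m.part i (m.part i + 1))
    {l : JPartition} (hm : m.sub l) (hi : m.part i < l.part i) : mplus.sub l := by
  intro r
  by_cases hr : r = i
  · subst hr
    rw [part_addBox_self hplus]
    exact hi
  · rw [part_addBox_of_ne hplus hr]
    exact hm r

end AddBox

end JPartition

open JPartition

section Rectangle

variable {b h : ℕ} {X : JPartition}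

theorem part_le_of_sub_rect (hX : X.sub (rect b h)) (r : ℕ) : X.part r ≤ b := by
  have := hX r
  simp only [rect] at this
  split_ifs at this <;> omega

theorem part_eq_zero_of_sub_rect (hX : X.sub (rect b h)) {r : ℕ} (hr : h ≤ r) : X.part r = 0 := by
  have := hX r
  simp only [rect, if_neg (not_lt.mpr hr)] at this
  omega

theorem conjPart_rect {c : ℕ} (hc : c < b) : (rect b h).conjPart c = h := by
  refine conjPart_eq_iff.mpr fun r => ?_
  simp only [rect]
  split_ifs <;> omega

theorem rotC_part_of_lt {u : ℕ} (hu : u < h) : (rotC b h X).part u = b - X.part (h - 1 - u) :=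
  if_pos hu

theorem rotC_sub_rotC {Y : JPartition} (hXY : X.sub Y) : (rotC b h Y).sub (rotC b h X) := by
  intro u
  simp only [rotC]
  split_ifs
  · exact Nat.sub_le_sub_left (hXY _) b
  · exact le_rfl

theorem conjPart_rotC (hX : X.sub (rect b h)) {c : ℕ} (hc : c < b) :
    (rotC b h X).conjPart c = h - X.conjPart (b - 1 - c) := by
  have hle := conjPart_le (fun _ => part_eq_zero_of_sub_rect hX) (b - 1 - c)
  refine conjPart_eq_iff.mpr fun r => ?_
  by_cases hr : r < h
  · have hXb := part_le_of_sub_rect hX (h - 1 - r)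
    have := X.lt_conjPart_iff (r := h - 1 - r) (c := b - 1 - c)
    rw [rotC_part_of_lt hr]
    omega
  · simp only [rotC, if_neg hr]
    omega

theorem rotC_addBox {m mplus : JPartition} {i : ℕ}
    (hplus : mplus.part = Function.update m.part i (m.part i + 1))
    (hmp : mplus.sub (rect b h)) (hi : i < h) :
    (rotC b h m).part = Function.update (rotC b h mplus).part (h - 1 - i)
      ((rotC b h mplus).part (h - 1 - i) + 1) := by
  funext u
  by_cases hu : u = h - 1 - i
  · subst hu
    have := part_le_of_sub_rect hmp i
    rw [Function.update_self, rotC_part_of_lt (by omega), rotC_part_of_lt (by omega),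
      show h - 1 - (h - 1 - i) = i by omega, part_addBox_self hplus] at *
    omega
  · rw [Function.update_of_ne hu]
    simp only [rotC]
    split_ifs
    · rw [part_addBox_of_ne hplus (by omega)]
    · rfl

end Rectangle

theorem intCast_mul_alpha_add_intCast_ne_zero {a t : ℤ} (ht : t ≠ 0) :
    (a : K) * alpha + t ≠ 0 := by
  have key : (a : K) * alpha + t =
      algebraMap (Polynomial ℚ) K ((a : Polynomial ℚ) * Polynomial.X + (t : Polynomial ℚ)) := by
    rw [map_add, map_mul, map_intCast, map_intCast, alpha, RatFunc.algebraMap_X]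
  rw [key, Ne, map_eq_zero_iff _ (IsFractionRing.injective (Polynomial ℚ) K)]
  intro h0
  have := congrArg (Polynomial.coeff · 0) h0
  simp only [Polynomial.coeff_add, Polynomial.mul_coeff_zero, Polynomial.intCast_coeff_zero,
    Polynomial.coeff_X_zero, mul_zero, zero_add, Polynomial.coeff_zero, Int.cast_eq_zero] at this
  exact ht this

theorem boxProdM_eq_prod_range {M : Type*} [CommMonoid M] {X : JPartition} {h : ℕ}
    (hX : ∀ r, h ≤ r → X.part r = 0) (f : ℕ × ℕ → M) :
    boxProdM X f = ∏ r ∈ range h, ∏ c ∈ range (X.part r), f (r, c) := by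
  refine finprod_eq_prod_of_mulSupport_subset _ fun r hr => ?_
  rw [coe_range, Set.mem_Iio]
  by_contra hrh
  exact hr (by simp [hX r (not_lt.mp hrh)])

-- The factors of `cMix X Y` from a row `i` of length `n`: the box `(i, c)` has arm `n - 1 - c`,
-- and its leg in `Y` plus one is `Y.conjPart c - i`.
def rowFactor (Y : JPartition) (i n : ℕ) : K :=
  ∏ c ∈ range n, (((n - 1 - c : ℕ) : K) * alpha + Y.conjPart c - i)

def colFactor (X Y : JPartition) (c : ℕ) : K :=
  ∏ u ∈ range (X.conjPart c), ((X.arm (u, c) : K) * alpha + Y.leg (u, c) + 1)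

theorem cMix_eq_prod_rowFactor {X : JPartition} {h : ℕ} (hX : ∀ r, h ≤ r → X.part r = 0)
    (Y : JPartition) : cMix X Y = ∏ r ∈ range h, rowFactor Y r (X.part r) := by
  rw [cMix, boxProdM_eq_prod_range hX]
  refine prod_congr rfl fun r _ => prod_congr rfl fun c hc => ?_
  rw [mem_range] at hc
  have harm : X.arm (r, c) = ((X.part r - 1 - c : ℕ) : ℤ) := by
    dsimp only [JPartition.arm]
    omega
  rw [harm, JPartition.leg]
  push_cast
  ring

theorem rowFactor_ne_zero {Y : JPartition} {i n : ℕ} (hn : n ≤ Y.part i) : rowFactor Y i n ≠ 0 := by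
  refine prod_ne_zero_iff.mpr fun c hc => ?_
  have hi : i < Y.conjPart c := Y.lt_conjPart_iff.mpr (by rw [mem_range] at hc; omega)
  have := intCast_mul_alpha_add_intCast_ne_zero (a := (n - 1 - c : ℕ))
    (t := Y.conjPart c - i) (by omega)
  push_cast at this
  rwa [add_sub_assoc]

theorem cMix_ne_zero {X Y : JPartition} (hXY : X.sub Y) : cMix X Y ≠ 0 := by
  obtain ⟨N, hN⟩ := X.finite'
  rw [cMix_eq_prod_rowFactor hN]
  exact prod_ne_zero_iff.mpr fun r _ => rowFactor_ne_zero (hXY r)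

theorem colFactor_ne_zero {X Y : JPartition} (hXY : X.sub Y) (c : ℕ) : colFactor X Y c ≠ 0 := by
  refine prod_ne_zero_iff.mpr fun u hu => ?_
  have hu' : u < Y.conjPart c := Y.lt_conjPart_iff.mpr
    (lt_of_lt_of_le (X.lt_conjPart_iff.mp (mem_range.mp hu)) (hXY u))
  have := intCast_mul_alpha_add_intCast_ne_zero (a := X.arm (u, c)) (t := Y.leg (u, c) + 1)
    (by dsimp only [JPartition.leg]; omega)
  push_cast at this
  rwa [← add_assoc] at this

theorem cMix_addBox_mul {m mplus : JPartition} {i : ℕ}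
    (hplus : mplus.part = Function.update m.part i (m.part i + 1)) (Y : JPartition) :
    cMix mplus Y * rowFactor Y i (m.part i) = cMix m Y * rowFactor Y i (m.part i + 1) := by
  obtain ⟨N, hN⟩ := m.finite'
  set H := max N (i + 1)
  have hm : ∀ r, H ≤ r → m.part r = 0 := fun r hr => hN r (by omega)
  have hmp : ∀ r, H ≤ r → mplus.part r = 0 := fun r hr => by
    rw [part_addBox_of_ne hplus (by omega)]
    exact hm r hr
  have hi : i ∈ range H := mem_range.mpr (by omega)
  have hrest : ∏ r ∈ (range H).erase i, rowFactor Y r (mplus.part r) =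
      ∏ r ∈ (range H).erase i, rowFactor Y r (m.part r) :=
    prod_congr rfl fun r hr => by rw [part_addBox_of_ne hplus (ne_of_mem_erase hr)]
  rw [cMix_eq_prod_rowFactor hm, cMix_eq_prod_rowFactor hmp, ← mul_prod_erase _ _ hi,
    ← mul_prod_erase _ _ hi, hrest, part_addBox_self hplus]
  ring

theorem rowFactor_rect_succ {b h i n : ℕ} (hn : n < b) :
    rowFactor (rect b h) i (n + 1) = rowFactor (rect b h) i n * ((n : K) * alpha + h - i) := by
  rw [rowFactor, rowFactor, prod_range_succ', Nat.add_sub_cancel, Nat.sub_zero,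
    conjPart_rect (by omega : 0 < b)]
  congr 1
  refine prod_congr rfl fun c hc => ?_
  rw [mem_range] at hc
  rw [conjPart_rect (by omega), conjPart_rect (by omega), Nat.sub_sub, Nat.add_comm c 1]

theorem prod_mul_eq_prod_mul_of_eqOn_erase {ι M : Type*} [CommMonoid M] [DecidableEq ι]
    {s : Finset ι} {f g : ι → M} {a : ι} (ha : a ∈ s) (hfg : ∀ x ∈ s, x ≠ a → f x = g x) :
    (∏ x ∈ s, f x) * g a = (∏ x ∈ s, g x) * f a := by
  rw [← mul_prod_erase s f ha, ← mul_prod_erase s g ha,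
    prod_congr rfl fun x hx => hfg x (mem_of_mem_erase hx) (ne_of_mem_erase hx)]
  ac_rfl

theorem colFactor_eq_prod_ite {X : JPartition} {h : ℕ} (hX : ∀ r, h ≤ r → X.part r = 0)
    (Y : JPartition) (c : ℕ) :
    colFactor X Y c = ∏ r ∈ range h,
      if c < X.part r then (X.arm (r, c) : K) * alpha + Y.leg (r, c) + 1 else 1 := by
  rw [colFactor, ← prod_filter]
  congr 1
  ext r
  have := conjPart_le hX c
  simp only [mem_range, mem_filter, ← X.lt_conjPart_iff]
  omega

theorem cMix_mul_colFactor (X : JPartition) {Y₁ Y₂ : JPartition} {c₀ : ℕ}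
    (hY : ∀ c, c ≠ c₀ → Y₁.conjPart c = Y₂.conjPart c) :
    cMix X Y₁ * colFactor X Y₂ c₀ = cMix X Y₂ * colFactor X Y₁ c₀ := by
  obtain ⟨N, hN⟩ := X.finite'
  rw [cMix, cMix, boxProdM_eq_prod_range hN, boxProdM_eq_prod_range hN, colFactor_eq_prod_ite hN,
    colFactor_eq_prod_ite hN, ← prod_mul_distrib, ← prod_mul_distrib]
  refine prod_congr rfl fun r _ => ?_
  split_ifs with hc
  · exact prod_mul_eq_prod_mul_of_eqOn_erase
      (f := fun c => (X.arm (r, c) : K) * alpha + Y₁.leg (r, c) + 1)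
      (g := fun c => (X.arm (r, c) : K) * alpha + Y₂.leg (r, c) + 1)
      (mem_range.mpr hc) fun c _ hc' => by simp only [JPartition.leg, hY c hc']
  · refine congrArg (· * 1) (prod_congr rfl fun c hc' => ?_)
    have : c ≠ c₀ := by
      rw [mem_range] at hc'
      omega
    simp only [JPartition.leg, hY c this]

theorem mul_prod_Ico_succ_eq_prod_Ico_mul {M : Type*} [CommMonoid M] (f : ℕ → M) {p q : ℕ}
    (hpq : p ≤ q) : f p * ∏ r ∈ Ico p q, f (r + 1) = (∏ r ∈ Ico p q, f r) * f q := by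
  rw [prod_Ico_add', ← prod_eq_prod_Ico_succ_bot (Nat.lt_succ_of_le hpq), prod_Ico_succ_top hpq]

theorem prod_conjPart_mul_prod_Ico {M : Type*} [CommMonoid M] (l : JPartition) {h : ℕ}
    (hl : ∀ r, h ≤ r → l.part r = 0) (j : ℕ) (F : ℕ → ℕ → M) :
    (∏ c ∈ range (j + 1), F (j - c) (l.conjPart c)) *
        ∏ r ∈ Ico (l.conjPart j) h, F (j - l.part r) (r + 1) =
      (∏ c ∈ range j, F (j - 1 - c) (l.conjPart c)) *
        (∏ r ∈ Ico (l.conjPart j) h, F (j - l.part r) r) * F j h := by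
  induction j generalizing F with
  | zero => simpa using mul_prod_Ico_succ_eq_prod_Ico_mul (F 0) (conjPart_le hl 0)
  | succ j ih =>
    set p := l.conjPart (j + 1)
    set q := l.conjPart j
    have hpq : p ≤ q := l.conj.antitone' j.le_succ
    have hqh : q ≤ h := conjPart_le hl j
    have hrow : ∀ s : ℕ → ℕ, ∏ r ∈ Ico p h, F (j + 1 - l.part r) (s r) =
        (∏ r ∈ Ico p q, F 0 (s r)) * ∏ r ∈ Ico q h, F (j - l.part r + 1) (s r) := by
      intro s
      rw [← prod_Ico_consecutive _ hpq hqh]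
      congr 1 <;> refine prod_congr rfl fun r hr => ?_ <;> rw [mem_Ico] at hr
      · have := l.lt_conjPart_iff.mp (show r < q by omega)
        have := mt l.lt_conjPart_iff.mpr (show ¬ r < p by omega)
        rw [show j + 1 - l.part r = 0 by omega]
      · have := mt l.lt_conjPart_iff.mpr (show ¬ r < q by omega)
        rw [show j + 1 - l.part r = j - l.part r + 1 by omega]
    have hcol : ∀ k ≤ j + 1, ∏ c ∈ range (k + 1), F (k - c) (l.conjPart c) =
        (∏ c ∈ range k, F (k - 1 - c + 1) (l.conjPart c)) * F 0 (l.conjPart k) := by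
      intro k hk
      rw [prod_range_succ, Nat.sub_self]
      congr 1
      refine prod_congr rfl fun c hc => ?_
      rw [mem_range] at hc
      rw [show k - c = k - 1 - c + 1 by omega]
    calc _ = ((∏ c ∈ range (j + 1), F (j - c + 1) (l.conjPart c)) *
            ∏ r ∈ Ico q h, F (j - l.part r + 1) (r + 1)) *
          (F 0 p * ∏ r ∈ Ico p q, F 0 (r + 1)) := by
          rw [hcol (j + 1) le_rfl, hrow (· + 1)]
          simp only [Nat.add_sub_cancel]
          ac_rfl
      _ = ((∏ c ∈ range j, F (j - 1 - c + 1) (l.conjPart c)) *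
            (∏ r ∈ Ico q h, F (j - l.part r + 1) r) * F (j + 1) h) *
          ((∏ r ∈ Ico p q, F 0 r) * F 0 q) := by
          rw [ih (fun a r => F (a + 1) r), mul_prod_Ico_succ_eq_prod_Ico_mul (F 0) hpq]
      _ = _ := by
          rw [Nat.add_sub_cancel, hcol j (by omega), hrow fun r => r]
          ac_rfl

theorem colFactor_rotC {b h j k : ℕ} {l Y : JPartition} (hl : l.sub (rect b h)) (hj : j < b)
    (hY : Y.conjPart (b - 1 - j) + k = h) :
    colFactor (rotC b h l) Y (b - 1 - j) = ∏ r ∈ Ico (l.conjPart j) h,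
      (((j - l.part r : ℕ) : K) * alpha + ((r + 1 : ℕ) : K) - k) := by
  have hq := conjPart_le (fun _ => part_eq_zero_of_sub_rect hl) j
  rw [colFactor, conjPart_rotC hl (by omega), show b - 1 - (b - 1 - j) = j by omega]
  refine prod_nbij' (fun u => h - 1 - u) (fun r => h - 1 - r) ?_ ?_ ?_ ?_ ?_
  · intro u hu
    simp only [mem_range, mem_Ico] at hu ⊢
    omega
  · intro r hr
    simp only [mem_range, mem_Ico] at hr ⊢
    omega
  · intro u hu
    rw [mem_range] at hu
    omega
  · intro r hr
    rw [mem_Ico] at hr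
    omega
  · intro u hu
    rw [mem_range] at hu
    have hlr := mt l.lt_conjPart_iff.mpr (show ¬ h - 1 - u < l.conjPart j by omega)
    have hlb := part_le_of_sub_rect hl (h - 1 - u)
    have harm : (rotC b h l).arm (u, b - 1 - j) = ((j - l.part (h - 1 - u) : ℕ) : ℤ) := by
      dsimp only [JPartition.arm]
      rw [rotC_part_of_lt (show u < h by omega)]
      omega
    have hleg : Y.leg (u, b - 1 - j) = ((h - 1 - u + 1 : ℕ) : ℤ) - k - 1 := by
      dsimp only [JPartition.leg]
      omega
    rw [harm, hleg]
    push_cast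
    ring

theorem rowFactor_succ_mul_colFactor_rotC {b h i j : ℕ} {l Y₁ Y₂ : JPartition}
    (hl : l.sub (rect b h)) (hj : j < b)
    (hY₁ : Y₁.conjPart (b - 1 - j) + i = h) (hY₂ : Y₂.conjPart (b - 1 - j) + (i + 1) = h) :
    rowFactor l i (j + 1) * colFactor (rotC b h l) Y₁ (b - 1 - j) =
      rowFactor l i j * colFactor (rotC b h l) Y₂ (b - 1 - j) * ((j : K) * alpha + h - i) := by
  have hcol₂ : colFactor (rotC b h l) Y₂ (b - 1 - j) =
      ∏ r ∈ Ico (l.conjPart j) h, (((j - l.part r : ℕ) : K) * alpha + r - i) := by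
    rw [colFactor_rotC hl hj hY₂]
    exact prod_congr rfl fun r _ => by push_cast; ring
  rw [rowFactor, rowFactor, colFactor_rotC hl hj hY₁, hcol₂, Nat.add_sub_cancel]
  exact prod_conjPart_mul_prod_Ico l (fun _ => part_eq_zero_of_sub_rect hl) j
    (fun a r => (a : K) * alpha + r - i)

/-- Adding a box of `λ\μ` to `μ` (in row `i`, giving the partition `μ₊`):
`c_{μ₊,λ}/c_{μ,λ} = (c_{λ̂,μ̂₊}·c_{μ₊,β})/(c_{λ̂,μ̂}·c_{μ,β})`, hats denoting
rotated complements in `β = (b^h)`. -/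
theorem stmt6 (b h : ℕ) (l m mplus : JPartition) (h2 : l.sub (rect b h))
    (h1 : m.sub l) (i : ℕ) (hbox : m.part i < l.part i)
    (hplus : mplus.part = Function.update m.part i (m.part i + 1)) :
    cMix mplus l / cMix m l =
      (cMix (rotC b h l) (rotC b h mplus) * cMix mplus (rect b h)) /
        (cMix (rotC b h l) (rotC b h m) * cMix m (rect b h)) := by
  have hi : i < h := by
    by_contra hih
    have := part_eq_zero_of_sub_rect h2 (not_lt.mp hih)
    omega
  have hj : m.part i < b := hbox.trans_le (part_le_of_sub_rect h2 i)
  have hm : m.sub (rect b h) := fun r => (h1 r).trans (h2 r)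
  have hmp : mplus.sub (rect b h) := fun r => (sub_of_addBox hplus h1 hbox r).trans (h2 r)
  have hrot := rotC_addBox hplus hmp hi
  have hcol : (rotC b h mplus).part (h - 1 - i) = b - 1 - m.part i := by
    rw [rotC_part_of_lt (by omega), show h - 1 - (h - 1 - i) = i by omega, part_addBox_self hplus]
    omega
  have hP := cMix_addBox_mul hplus l
  have hS : cMix mplus (rect b h) = cMix m (rect b h) * ((m.part i : K) * alpha + h - i) :=
    mul_right_cancel₀ (rowFactor_ne_zero (hm i))
      (by rw [cMix_addBox_mul hplus, rowFactor_rect_succ hj]; ring)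
  have hQ := cMix_mul_colFactor (rotC b h l) (c₀ := b - 1 - m.part i)
    fun c hc => conjPart_addBox_of_ne hrot (hcol ▸ hc)
  have hM := rowFactor_succ_mul_colFactor_rotC (i := i) (Y₁ := rotC b h m) (Y₂ := rotC b h mplus)
    h2 hj (by rw [← hcol, conjPart_addBox_self hrot]; omega)
    (by rw [← hcol, conjPart_part_of_addBox hrot]; omega)
  have hL := rotC_sub_rotC (b := b) (h := h) h1
  rw [div_eq_div_iff (cMix_ne_zero h1) (mul_ne_zero (cMix_ne_zero hL) (cMix_ne_zero hm)), hS]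
  refine mul_left_cancel₀ (mul_ne_zero (rowFactor_ne_zero hbox.le)
    (colFactor_ne_zero hL (b - 1 - m.part i))) ?_
  set a := rowFactor l i (m.part i)
  set E := colFactor (rotC b h l) (rotC b h m) (b - 1 - m.part i)
  set t : K := (m.part i : K) * alpha + h - i
  set P := cMix m l
  set Q := cMix (rotC b h l) (rotC b h m)
  set S := cMix m (rect b h)
  linear_combination (E * Q * S) * hP + (Q * S * P) * hM + (a * P * S * t) * hQ

end
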